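/- arXiv:1109.5504 — 3 statements merged into one kernel-verified Lean document; each statement's English description precedes it below -/
import Mathlib

section
/- Let U : ℝ → ℝ be C², 2π-periodic and strictly positive, and let 0 < α < 2. Along any solution (ϑ(τ), φ(τ)) of the planar system ϑ' = 2U(ϑ)sin(φ−ϑ), φ' = U'(ϑ)cos(φ−ϑ) + αU(ϑ)sin(φ−ϑ), the function v(τ) = √(U(ϑ(τ))) · cos(φ(τ)−ϑ(τ)) satisfies v' = (2−α)·U(ϑ)^{3/2}·sin²(φ−ϑ); in particular v is non-decreasing. -/
open Real

/-- Along solutions of Devaney's planar system, v = √U(ϑ)·cos(φ−ϑ) satisfies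
v' = (2−α) U(ϑ)^{3/2} sin²(φ−ϑ); in particular v is non-decreasing. -/
theorem stmt0
    (U : ℝ → ℝ) (hU : ContDiff ℝ 2 U)
    (hUper : ∀ ϑ, U (ϑ + 2 * π) = U ϑ)
    (hUpos : ∀ ϑ, 0 < U ϑ)
    (α : ℝ) (hα : 0 < α) (hα2 : α < 2)
    (ϑ φ : ℝ → ℝ)
    (hϑ : ∀ τ, HasDerivAt ϑ (2 * U (ϑ τ) * Real.sin (φ τ - ϑ τ)) τ)
    (hφ : ∀ τ, HasDerivAt φ
      (deriv U (ϑ τ) * Real.cos (φ τ - ϑ τ) + α * U (ϑ τ) * Real.sin (φ τ - ϑ τ)) τ)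
    (v : ℝ → ℝ)
    (hv : ∀ τ, v τ = Real.sqrt (U (ϑ τ)) * Real.cos (φ τ - ϑ τ)) :
    (∀ τ, HasDerivAt v
      ((2 - α) * (U (ϑ τ)) ^ ((3 : ℝ) / 2) * (Real.sin (φ τ - ϑ τ)) ^ 2) τ)
    ∧ Monotone v := by
  have hUdiff : Differentiable ℝ U := hU.differentiable (by norm_num)
  have key : ∀ τ, HasDerivAt v
      ((2 - α) * (U (ϑ τ)) ^ ((3 : ℝ) / 2) * (Real.sin (φ τ - ϑ τ)) ^ 2) τ := by
    intro τ
    have hveq : v = fun τ => Real.sqrt (U (ϑ τ)) * Real.cos (φ τ - ϑ τ) := funext hv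
    rw [hveq]
    set Δ : ℝ := φ τ - ϑ τ with hΔdef
    have hΔ : HasDerivAt (fun t => φ t - ϑ t)
        (deriv U (ϑ τ) * Real.cos Δ + α * U (ϑ τ) * Real.sin Δ
          - 2 * U (ϑ τ) * Real.sin Δ) τ := (hφ τ).sub (hϑ τ)
    have hUϑ : HasDerivAt (fun t => U (ϑ t))
        (deriv U (ϑ τ) * (2 * U (ϑ τ) * Real.sin Δ)) τ :=
      ((hUdiff (ϑ τ)).hasDerivAt).comp τ (hϑ τ)
    have hUne : U (ϑ τ) ≠ 0 := ne_of_gt (hUpos _)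
    have hs : HasDerivAt (fun t => Real.sqrt (U (ϑ t)))
        (1 / (2 * Real.sqrt (U (ϑ τ))) * (deriv U (ϑ τ) * (2 * U (ϑ τ) * Real.sin Δ))) τ :=
      (Real.hasDerivAt_sqrt hUne).comp τ hUϑ
    have hcos : HasDerivAt (fun t => Real.cos (φ t - ϑ t))
        (-Real.sin Δ * (deriv U (ϑ τ) * Real.cos Δ + α * U (ϑ τ) * Real.sin Δ
          - 2 * U (ϑ τ) * Real.sin Δ)) τ :=
      hΔ.cos
    have hprod := hs.mul hcos
    refine hprod.congr_deriv ?_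
    set s : ℝ := Real.sqrt (U (ϑ τ)) with hsdef
    have hspos : 0 < s := Real.sqrt_pos.mpr (hUpos _)
    have hss : s * s = U (ϑ τ) := Real.mul_self_sqrt (hUpos _).le
    have hrpow : (U (ϑ τ)) ^ ((3 : ℝ) / 2) = U (ϑ τ) * s := by
      rw [show (3 : ℝ)/2 = 1 + 1/2 by norm_num, Real.rpow_add (hUpos _), Real.rpow_one,
        hsdef, Real.sqrt_eq_rpow]
    rw [hrpow, ← hss]
    field_simp
    ring
  refine ⟨key, ?_⟩
  have hdiff : Differentiable ℝ v := fun τ => (key τ).differentiableAt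
  apply monotone_of_deriv_nonneg hdiff
  intro τ
  rw [(key τ).deriv]
  have h1 : (0:ℝ) ≤ 2 - α := by linarith
  have h2 : (0:ℝ) < (U (ϑ τ)) ^ ((3:ℝ)/2) := Real.rpow_pos_of_pos (hUpos _) _
  positivity
end

section
/- Let U : ℝ → ℝ be C², positive, with min U = U_min > 0 and max U = U_max. Suppose (ϑ(τ), φ(τ)) is a heteroclinic solution of the system ϑ' = 2U(ϑ)sin(φ−ϑ), φ' = U'(ϑ)cos(φ−ϑ) + αU(ϑ)sin(φ−ϑ) connecting the equilibrium (ϑ⁻, ϑ⁻+π) as τ → −∞ to (ϑ⁺, ϑ⁺) as τ → +∞, with ϑ⁻ < ϑ⁺, and along which v(τ) = √(U(ϑ))cos(φ−ϑ) and ϑ are strictly increasing with v ranging over (−√U_min, √U_min). Then 2 − 2π/(ϑ⁺−ϑ⁻) ≤ α ≤ 2 − (4/(ϑ⁺−ϑ⁻))·arcsin(√(U_min/U_max)). -/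
open Real Filter

lemma monotone_hasDerivAt_nonneg {f : ℝ → ℝ} {d τ : ℝ}
    (hm : Monotone f) (hd : HasDerivAt f d τ) : 0 ≤ d := by
  have h1 : Tendsto (slope f τ) (nhdsWithin τ (Set.Ioi τ)) (nhds d) :=
    (hasDerivAt_iff_tendsto_slope.1 hd).mono_left
      (nhdsWithin_mono _ (fun x hx => ne_of_gt hx))
  refine ge_of_tendsto h1 ?_
  filter_upwards [self_mem_nhdsWithin] with x hx
  have hx' : τ < x := hx
  have : 0 ≤ (f x - f τ) / (x - τ) :=
    div_nonneg (sub_nonneg.2 (hm hx'.le)) (sub_nonneg.2 hx'.le)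
  simpa [slope_def_field, div_eq_iff] using this

lemma arcsin_comp_hasDerivAt {g : ℝ → ℝ} {g' τ W : ℝ}
    (hW : 0 < W) (h2 : (g τ)^2 < W) (hd : HasDerivAt g g' τ) :
    HasDerivAt (fun t => Real.arcsin (g t / Real.sqrt W))
      (g' / Real.sqrt (W - g τ ^ 2)) τ := by
  have hsW : 0 < Real.sqrt W := Real.sqrt_pos.2 hW
  have habs : |g τ| < Real.sqrt W := by
    have := Real.sqrt_lt_sqrt (sq_nonneg (g τ)) h2
    rwa [Real.sqrt_sq_eq_abs] at this
  set x := g τ / Real.sqrt W with hx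
  have hxabs : |x| < 1 := by
    rw [hx, abs_div, abs_of_pos hsW, div_lt_one hsW]
    exact habs
  have hx1 : x ≠ 1 := by intro h; rw [h] at hxabs; simp at hxabs
  have hx2 : x ≠ -1 := by intro h; rw [h] at hxabs; simp at hxabs
  have hxsq : x ^ 2 < 1 := by
    nlinarith [sq_abs x, abs_nonneg x]
  have h1x : 0 < 1 - x ^ 2 := by linarith
  have key : Real.sqrt (1 - x ^ 2) * Real.sqrt W = Real.sqrt (W - g τ ^ 2) := by
    rw [← Real.sqrt_mul h1x.le]
    congr 1
    rw [hx, div_pow, Real.sq_sqrt hW.le]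
    field_simp
  have hD := (Real.hasDerivAt_arcsin hx2 hx1).comp τ (hd.div_const (Real.sqrt W))
  refine hD.congr_deriv ?_
  rw [← key]
  have hne1 : Real.sqrt (1 - x ^ 2) ≠ 0 := ne_of_gt (Real.sqrt_pos.2 h1x)
  field_simp

/-- Necessary condition on α for a saddle-saddle heteroclinic connection of
Devaney's system: apsidal-angle estimates. -/
theorem stmt2
    (U : ℝ → ℝ) (hU : ContDiff ℝ 2 U)
    (Umin Umax : ℝ) (hUmin : 0 < Umin)
    (hbounds : ∀ ϑ, Umin ≤ U ϑ ∧ U ϑ ≤ Umax)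
    (α : ℝ) (hα : 0 < α) (hα2 : α < 2)
    (ϑ φ : ℝ → ℝ)
    (hϑ : ∀ τ, HasDerivAt ϑ (2 * U (ϑ τ) * Real.sin (φ τ - ϑ τ)) τ)
    (hφ : ∀ τ, HasDerivAt φ
      (deriv U (ϑ τ) * Real.cos (φ τ - ϑ τ) + α * U (ϑ τ) * Real.sin (φ τ - ϑ τ)) τ)
    (ϑm ϑp : ℝ) (hlt : ϑm < ϑp)
    (hϑmin : Tendsto ϑ atBot (nhds ϑm)) (hϑplus : Tendsto ϑ atTop (nhds ϑp))
    (hφmin : Tendsto φ atBot (nhds (ϑm + π))) (hφplus : Tendsto φ atTop (nhds ϑp))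
    (v : ℝ → ℝ)
    (hv : ∀ τ, v τ = Real.sqrt (U (ϑ τ)) * Real.cos (φ τ - ϑ τ))
    (hvmono : StrictMono v) (hϑmono : StrictMono ϑ)
    (hvrange : ∀ τ, -Real.sqrt Umin < v τ ∧ v τ < Real.sqrt Umin)
    (hvlim1 : Tendsto v atBot (nhds (-Real.sqrt Umin)))
    (hvlim2 : Tendsto v atTop (nhds (Real.sqrt Umin))) :
    2 - 2 * π / (ϑp - ϑm) ≤ α ∧
      α ≤ 2 - 4 / (ϑp - ϑm) * Real.arcsin (Real.sqrt (Umin / Umax)) := by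
  have hd : 0 < ϑp - ϑm := sub_pos.2 hlt
  have hUc : Differentiable ℝ U := hU.differentiable (by norm_num)
  have hUpos : ∀ x, 0 < U x := fun x => lt_of_lt_of_le hUmin (hbounds x).1
  have hmM : Umin ≤ Umax := le_trans (hbounds 0).1 (hbounds 0).2
  have hUmax : 0 < Umax := lt_of_lt_of_le hUmin hmM
  -- v squared bounds
  have hv2min : ∀ τ, (v τ)^2 < Umin := by
    intro τ
    have h := hvrange τ
    have : (v τ)^2 < (Real.sqrt Umin)^2 := sq_lt_sq' h.1 h.2
    rwa [Real.sq_sqrt hUmin.le] at this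
  have hv2max : ∀ τ, (v τ)^2 < Umax := fun τ => lt_of_lt_of_le (hv2min τ) hmM
  -- derivative of v
  have hvderiv : ∀ τ, HasDerivAt v
      ((2 - α) * U (ϑ τ) * Real.sqrt (U (ϑ τ)) * Real.sin (φ τ - ϑ τ) ^ 2) τ := by
    intro τ
    have hUa := hUpos (ϑ τ)
    have hUd : HasDerivAt U (deriv U (ϑ τ)) (ϑ τ) := (hUc (ϑ τ)).hasDerivAt
    have hUϑ : HasDerivAt (fun t => U (ϑ t))
        (deriv U (ϑ τ) * (2 * U (ϑ τ) * Real.sin (φ τ - ϑ τ))) τ := hUd.comp τ (hϑ τ)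
    have h1 : HasDerivAt (fun t => Real.sqrt (U (ϑ t)))
        (1 / (2 * Real.sqrt (U (ϑ τ))) *
          (deriv U (ϑ τ) * (2 * U (ϑ τ) * Real.sin (φ τ - ϑ τ)))) τ :=
      (Real.hasDerivAt_sqrt (ne_of_gt hUa)).comp τ hUϑ
    have h2 : HasDerivAt (fun t => Real.cos (φ t - ϑ t))
        (-Real.sin (φ τ - ϑ τ) *
          ((deriv U (ϑ τ) * Real.cos (φ τ - ϑ τ) + α * U (ϑ τ) * Real.sin (φ τ - ϑ τ)) -
            2 * U (ϑ τ) * Real.sin (φ τ - ϑ τ))) τ :=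
      ((hφ τ).sub (hϑ τ)).cos
    have h3 := h1.mul h2
    have hveq : v = fun t => Real.sqrt (U (ϑ t)) * Real.cos (φ t - ϑ t) := funext hv
    rw [hveq]
    refine h3.congr_deriv ?_
    set s := Real.sin (φ τ - ϑ τ)
    set c := Real.cos (φ τ - ϑ τ)
    set q := Real.sqrt (U (ϑ τ)) with hqdef
    have hq : q ^ 2 = U (ϑ τ) := Real.sq_sqrt hUa.le
    have hqne : q ≠ 0 := ne_of_gt (Real.sqrt_pos.2 hUa)
    rw [← hq]
    field_simp
    ring
  -- sin nonneg
  have hsin : ∀ τ, 0 ≤ Real.sin (φ τ - ϑ τ) := by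
    intro τ
    have h0 : 0 ≤ 2 * U (ϑ τ) * Real.sin (φ τ - ϑ τ) :=
      monotone_hasDerivAt_nonneg hϑmono.monotone (hϑ τ)
    nlinarith [hUpos (ϑ τ)]
  -- sqrt (U - v^2) = sqrt U * sin
  have hkey : ∀ τ, Real.sqrt (U (ϑ τ) - (v τ)^2) =
      Real.sqrt (U (ϑ τ)) * Real.sin (φ τ - ϑ τ) := by
    intro τ
    have hUa := hUpos (ϑ τ)
    have h1 : U (ϑ τ) - (v τ)^2 = (Real.sqrt (U (ϑ τ)) * Real.sin (φ τ - ϑ τ))^2 := by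
      rw [hv, mul_pow, mul_pow, Real.sq_sqrt hUa.le]
      nlinarith [Real.sin_sq_add_cos_sq (φ τ - ϑ τ)]
    rw [h1, Real.sqrt_sq (mul_nonneg (Real.sqrt_nonneg _) (hsin τ))]
  -- general derivative bound setup
  have hW2 : ∀ W : ℝ, 0 < W → (∀ τ, (v τ)^2 < W) →
      ∀ τ, HasDerivAt (fun t => Real.arcsin (v t / Real.sqrt W) - (2 - α)/2 * ϑ t)
        ((2 - α) * U (ϑ τ) * Real.sqrt (U (ϑ τ)) * Real.sin (φ τ - ϑ τ) ^ 2
            / Real.sqrt (W - (v τ)^2)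
          - (2 - α)/2 * (2 * U (ϑ τ) * Real.sin (φ τ - ϑ τ))) τ := by
    intro W hW hvW τ
    exact (arcsin_comp_hasDerivAt hW (hvW τ) (hvderiv τ)).sub ((hϑ τ).const_mul _)
  -- the derivative expression comparison
  have hcomp : ∀ W : ℝ, 0 < W → (∀ τ, (v τ)^2 < W) → ∀ τ,
      ((2 - α) * U (ϑ τ) * Real.sqrt (U (ϑ τ)) * Real.sin (φ τ - ϑ τ) ^ 2
          / Real.sqrt (W - (v τ)^2)
        - (2 - α)/2 * (2 * U (ϑ τ) * Real.sin (φ τ - ϑ τ)))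
      = (2 - α) * U (ϑ τ) * Real.sin (φ τ - ϑ τ) *
          (Real.sqrt (U (ϑ τ)) * Real.sin (φ τ - ϑ τ) / Real.sqrt (W - (v τ)^2) - 1) := by
    intro W hW hvW τ
    have hD : 0 < Real.sqrt (W - (v τ)^2) := Real.sqrt_pos.2 (by linarith [hvW τ])
    field_simp
  -- lower bound part: W = Umin, monotone
  have hmono : Monotone (fun t => Real.arcsin (v t / Real.sqrt Umin) - (2 - α)/2 * ϑ t) := by
    apply monotone_of_deriv_nonneg
    · exact fun t => (hW2 Umin hUmin hv2min t).differentiableAt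
    · intro t
      rw [(hW2 Umin hUmin hv2min t).deriv, hcomp Umin hUmin hv2min t]
      have hs := hsin t
      have hUa := hUpos (ϑ t)
      have hD : 0 < Real.sqrt (Umin - (v t)^2) := Real.sqrt_pos.2 (by linarith [hv2min t])
      have hge : Real.sqrt (Umin - (v t)^2) ≤ Real.sqrt (U (ϑ t)) * Real.sin (φ t - ϑ t) := by
        rw [← hkey t]
        exact Real.sqrt_le_sqrt (by linarith [(hbounds (ϑ t)).1])
      have h1 : (1:ℝ) ≤ Real.sqrt (U (ϑ t)) * Real.sin (φ t - ϑ t) / Real.sqrt (Umin - (v t)^2) :=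
        (one_le_div hD).2 hge
      have h2 : 0 ≤ (2 - α) * U (ϑ t) * Real.sin (φ t - ϑ t) :=
        mul_nonneg (mul_nonneg (by linarith) hUa.le) hs
      nlinarith
  -- upper bound part: W = Umax, antitone
  have hanti : Antitone (fun t => Real.arcsin (v t / Real.sqrt Umax) - (2 - α)/2 * ϑ t) := by
    apply antitone_of_deriv_nonpos
    · exact fun t => (hW2 Umax hUmax hv2max t).differentiableAt
    · intro t
      rw [(hW2 Umax hUmax hv2max t).deriv, hcomp Umax hUmax hv2max t]
      have hs := hsin t
      have hUa := hUpos (ϑ t)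
      have hD : 0 < Real.sqrt (Umax - (v t)^2) := Real.sqrt_pos.2 (by linarith [hv2max t])
      have hge : Real.sqrt (U (ϑ t)) * Real.sin (φ t - ϑ t) ≤ Real.sqrt (Umax - (v t)^2) := by
        rw [← hkey t]
        exact Real.sqrt_le_sqrt (by linarith [(hbounds (ϑ t)).2])
      have h1 : Real.sqrt (U (ϑ t)) * Real.sin (φ t - ϑ t) / Real.sqrt (Umax - (v t)^2) ≤ 1 :=
        (div_le_one hD).2 hge
      have h2 : 0 ≤ (2 - α) * U (ϑ t) * Real.sin (φ t - ϑ t) :=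
        mul_nonneg (mul_nonneg (by linarith) hUa.le) hs
      nlinarith
  -- limits
  have hsm : 0 < Real.sqrt Umin := Real.sqrt_pos.2 hUmin
  have hsM : 0 < Real.sqrt Umax := Real.sqrt_pos.2 hUmax
  have hlim_gen : ∀ (W : ℝ) (L : Filter ℝ) (a b : ℝ), 0 < W →
      Tendsto v L (nhds a) → Tendsto ϑ L (nhds b) →
      Tendsto (fun t => Real.arcsin (v t / Real.sqrt W) - (2 - α)/2 * ϑ t) L
        (nhds (Real.arcsin (a / Real.sqrt W) - (2 - α)/2 * b)) := by
    intro W L a b hW hva hϑb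
    exact ((Real.continuous_arcsin.tendsto _).comp (hva.div_const _)).sub (hϑb.const_mul _)
  -- lower bound
  constructor
  · have hlB := hlim_gen Umin atBot (-Real.sqrt Umin) ϑm hUmin hvlim1 hϑmin
    have hlT := hlim_gen Umin atTop (Real.sqrt Umin) ϑp hUmin hvlim2 hϑplus
    rw [neg_div, div_self (ne_of_gt hsm), Real.arcsin_neg, Real.arcsin_one] at hlB
    rw [div_self (ne_of_gt hsm), Real.arcsin_one] at hlT
    have h1 : -(π/2) - (2 - α)/2 * ϑm ≤
        Real.arcsin (v 0 / Real.sqrt Umin) - (2 - α)/2 * ϑ 0 :=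
      le_of_tendsto hlB (Filter.eventually_atBot.2 ⟨0, fun t ht => hmono ht⟩)
    have h2 : Real.arcsin (v 0 / Real.sqrt Umin) - (2 - α)/2 * ϑ 0 ≤
        π/2 - (2 - α)/2 * ϑp :=
      ge_of_tendsto hlT (Filter.eventually_atTop.2 ⟨0, fun t ht => hmono ht⟩)
    have h3 : (2 - α)/2 * (ϑp - ϑm) ≤ π := by linarith
    have h4 : 2 - α ≤ 2 * π / (ϑp - ϑm) := by
      rw [le_div_iff₀ hd]; linarith
    linarith
  · have hlB := hlim_gen Umax atBot (-Real.sqrt Umin) ϑm hUmax hvlim1 hϑmin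
    have hlT := hlim_gen Umax atTop (Real.sqrt Umin) ϑp hUmax hvlim2 hϑplus
    have hsd : Real.sqrt (Umin / Umax) = Real.sqrt Umin / Real.sqrt Umax :=
      Real.sqrt_div hUmin.le Umax
    rw [neg_div, Real.arcsin_neg] at hlB
    have h1 : Real.arcsin (v 0 / Real.sqrt Umax) - (2 - α)/2 * ϑ 0 ≤
        -Real.arcsin (Real.sqrt Umin / Real.sqrt Umax) - (2 - α)/2 * ϑm :=
      ge_of_tendsto hlB (Filter.eventually_atBot.2 ⟨0, fun t ht => hanti ht⟩)
    have h2 : Real.arcsin (Real.sqrt Umin / Real.sqrt Umax) - (2 - α)/2 * ϑp ≤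
        Real.arcsin (v 0 / Real.sqrt Umax) - (2 - α)/2 * ϑ 0 :=
      le_of_tendsto hlT (Filter.eventually_atTop.2 ⟨0, fun t ht => hanti ht⟩)
    have h3 : 2 * Real.arcsin (Real.sqrt Umin / Real.sqrt Umax) ≤ (2 - α)/2 * (ϑp - ϑm) := by
      linarith
    have h4 : 4 / (ϑp - ϑm) * Real.arcsin (Real.sqrt (Umin / Umax)) ≤ 2 - α := by
      rw [hsd, div_mul_eq_mul_div, div_le_iff₀ hd]
      linarith
    linarith
end

section
/- Let x(t) = (r(t), ϑ(t)) (polar coordinates) on [a,b] with r > 0, and y(τ) = (ρ(τ), φ(τ)) on [a',b'] with ρ > 0, related by τ = a' + ∫_a^t r^{2(1−β)/β} ds, r(t) = ρ(τ)^β, ϑ(t) = β·φ(τ), for some β > 0. Let V(x) = U(ϑ)/r^α with α ∈ ℝ. Then ∫_a^b (½|ẋ|² + V(x)) dt = β² ∫_{a'}^{b'} (½|y'|² + Ṽ(y)) dτ, where Ṽ(y) = Ũ(φ)/ρ^{α̃}, Ũ(φ) = U(βφ)/β², and α̃ = 2 − β(2−α). -/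
open Real intervalIntegral

/-- Conformal equivariance of the planar action under the change
τ = a' + ∫ r^{2(1−β)/β}, r = ρ^β, ϑ = βφ: the action for V = U(ϑ)/r^α equals
β² times the action for Ṽ = Ũ(φ)/ρ^{α̃}, where Ũ(φ) = U(βφ)/β² and
α̃ = 2 − β(2−α). -/
theorem stmt13
    (U : ℝ → ℝ) (hUper : ∀ ϑ, U (ϑ + 2 * π) = U ϑ) (hUc : Continuous U)
    (α β : ℝ) (hβ : 0 < β)
    (a b a' b' : ℝ) (hab : a < b)
    (r ϑ ρ φ : ℝ → ℝ)
    (hr : ∀ t ∈ Set.Icc a b, 0 < r t) (hρ : ∀ τ ∈ Set.Icc a' b', 0 < ρ τ)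
    (hrd : ∀ t ∈ Set.Icc a b, DifferentiableAt ℝ r t)
    (hϑd : ∀ t ∈ Set.Icc a b, DifferentiableAt ℝ ϑ t)
    (hρd : ∀ τ ∈ Set.Icc a' b', DifferentiableAt ℝ ρ τ)
    (hφd : ∀ τ ∈ Set.Icc a' b', DifferentiableAt ℝ φ τ)
    (τf : ℝ → ℝ)
    (hτ : ∀ t ∈ Set.Icc a b, τf t = a' + ∫ s in a..t, (r s) ^ (2 * (1 - β) / β))
    (hb' : b' = a' + ∫ s in a..b, (r s) ^ (2 * (1 - β) / β))
    (hrρ : ∀ t ∈ Set.Icc a b, r t = (ρ (τf t)) ^ β)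
    (hϑφ : ∀ t ∈ Set.Icc a b, ϑ t = β * φ (τf t)) :
    (∫ t in a..b, (1 / 2 * ((deriv r t) ^ 2 + (r t) ^ 2 * (deriv ϑ t) ^ 2)
        + U (ϑ t) / (r t) ^ α))
    = β ^ 2 * ∫ τ in a'..b',
        (1 / 2 * ((deriv ρ τ) ^ 2 + (ρ τ) ^ 2 * (deriv φ τ) ^ 2)
          + (U (β * φ τ) / β ^ 2) / (ρ τ) ^ (2 - β * (2 - α))) := by
  have hab' : a ≤ b := hab.le
  set σ : ℝ := 2 * (1 - β) / β with hσ
  set f : ℝ → ℝ := fun s => r s ^ σ with hf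
  -- continuity facts
  have hfc : ContinuousOn f (Set.Icc a b) := by
    intro t ht
    exact (((hrd t ht).continuousAt).rpow_const (Or.inl (hr t ht).ne')).continuousWithinAt
  have hfpos : ∀ t ∈ Set.Icc a b, 0 < f t := fun t ht => Real.rpow_pos_of_pos (hr t ht) σ
  have hamem : a ∈ Set.Icc a b := ⟨le_refl a, hab'⟩
  have hbmem : b ∈ Set.Icc a b := ⟨hab', le_refl b⟩
  have hint : ∀ t ∈ Set.Icc a b, IntervalIntegrable f MeasureTheory.volume a t := by
    intro t ht
    exact (hfc.mono (Set.uIcc_subset_Icc hamem ht)).intervalIntegrable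
  -- endpoints of τf
  have hτa : τf a = a' := by
    rw [hτ a hamem]; simp
  have hτb : τf b = b' := by
    rw [hτ b hbmem, hb']
  -- derivative of τf at interior points
  have hd : ∀ t ∈ Set.Ioo a b, HasDerivAt τf (f t) t := by
    intro t ht
    have htm : t ∈ Set.Icc a b := Set.Ioo_subset_Icc_self ht
    have hnhds : Set.Icc a b ∈ nhds t := Icc_mem_nhds ht.1 ht.2
    have hmeas : StronglyMeasurableAtFilter f (nhds t) MeasureTheory.volume :=
      ContinuousOn.stronglyMeasurableAtFilter isOpen_Ioo
        (hfc.mono Set.Ioo_subset_Icc_self) t ht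
    have hca : ContinuousAt f t := (hfc t htm).continuousAt hnhds
    have h1 : HasDerivAt (fun u => a' + ∫ s in a..u, f s) (f t) t :=
      (intervalIntegral.integral_hasDerivAt_right (hint t htm) hmeas hca).const_add a'
    refine h1.congr_of_eventuallyEq ?_
    filter_upwards [hnhds] with u hu
    exact hτ u hu
  -- continuity of τf on Icc
  have hτc : ContinuousOn τf (Set.Icc a b) := by
    have h1 : ContinuousOn (fun u => a' + ∫ s in a..u, f s) (Set.Icc a b) := by
      have := intervalIntegral.continuousOn_primitive_interval
        (f := f) (μ := MeasureTheory.volume) (a := a) (b := b)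
        ((hfc.mono (by rw [Set.uIcc_of_le hab'])).integrableOn_compact isCompact_uIcc)
      rw [Set.uIcc_of_le hab'] at this
      exact continuousOn_const.add this
    exact h1.congr fun u hu => hτ u hu
  -- strict monotonicity
  have hmono : StrictMonoOn τf (Set.Icc a b) := by
    apply strictMonoOn_of_deriv_pos (convex_Icc a b) hτc
    intro t ht
    rw [interior_Icc] at ht
    rw [(hd t ht).deriv]
    exact hfpos t (Set.Ioo_subset_Icc_self ht)
  have ha'b' : a' < b' := by
    rw [← hτa, ← hτb]; exact hmono hamem hbmem hab
  have hmaps : ∀ t ∈ Set.Icc a b, τf t ∈ Set.Icc a' b' := by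
    intro t ht
    constructor
    · rw [← hτa]; exact hmono.monotoneOn hamem ht ht.1
    · rw [← hτb]; exact hmono.monotoneOn ht hbmem ht.2
  -- image of the open interval
  have himg : τf '' Set.Ioo a b = Set.Ioo a' b' := by
    apply Set.Subset.antisymm
    · rintro _ ⟨t, ht, rfl⟩
      have htm : t ∈ Set.Icc a b := Set.Ioo_subset_Icc_self ht
      exact ⟨hτa ▸ hmono hamem htm ht.1, hτb ▸ hmono htm hbmem ht.2⟩
    · rw [← hτa, ← hτb]
      exact intermediate_value_Ioo hab' hτc
  -- change of variables
  set G : ℝ → ℝ := fun τ => β ^ 2 * (1 / 2 * ((deriv ρ τ) ^ 2 + (ρ τ) ^ 2 * (deriv φ τ) ^ 2)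
          + (U (β * φ τ) / β ^ 2) / (ρ τ) ^ (2 - β * (2 - α))) with hG
  have key : ∫ x in τf '' Set.Ioo a b, G x
      = ∫ t in Set.Ioo a b, |f t| • G (τf t) :=
    MeasureTheory.integral_image_eq_integral_abs_deriv_smul measurableSet_Ioo
      (fun t ht => (hd t ht).hasDerivWithinAt)
      ((hmono.injOn).mono Set.Ioo_subset_Icc_self) G
  -- pointwise identity on the open interval
  have hpt : ∀ t ∈ Set.Ioo a b,
      1 / 2 * ((deriv r t) ^ 2 + (r t) ^ 2 * (deriv ϑ t) ^ 2) + U (ϑ t) / (r t) ^ α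
        = |f t| • G (τf t) := by
    intro t ht
    have htm : t ∈ Set.Icc a b := Set.Ioo_subset_Icc_self ht
    have hnhds : Set.Icc a b ∈ nhds t := Icc_mem_nhds ht.1 ht.2
    have hτm : τf t ∈ Set.Icc a' b' := hmaps t htm
    have hXpos : 0 < ρ (τf t) := hρ _ hτm
    have hDpos : 0 < f t := hfpos t htm
    have hDX : f t = ρ (τf t) ^ (2 - 2 * β) := by
      show r t ^ σ = _
      rw [hrρ t htm, ← Real.rpow_mul hXpos.le]
      congr 1
      rw [hσ]
      field_simp
    -- derivative of r
    have hdr : deriv r t = deriv ρ (τf t) * f t * β * ρ (τf t) ^ (β - 1) := by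
      have hcomp : HasDerivAt (fun s => ρ (τf s)) (deriv ρ (τf t) * f t) t :=
        HasDerivAt.comp t ((hρd _ hτm).hasDerivAt) (hd t ht)
      have h2 : HasDerivAt (fun s => ρ (τf s) ^ β)
          (deriv ρ (τf t) * f t * β * ρ (τf t) ^ (β - 1)) t :=
        hcomp.rpow_const (Or.inl hXpos.ne')
      have heq : r =ᶠ[nhds t] fun s => ρ (τf s) ^ β := by
        filter_upwards [hnhds] with s hs
        exact hrρ s hs
      rw [Filter.EventuallyEq.deriv_eq heq]
      exact h2.deriv
    -- derivative of ϑ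
    have hdϑ : deriv ϑ t = β * (deriv φ (τf t) * f t) := by
      have hcomp : HasDerivAt (fun s => φ (τf s)) (deriv φ (τf t) * f t) t :=
        HasDerivAt.comp t ((hφd _ hτm).hasDerivAt) (hd t ht)
      have h2 : HasDerivAt (fun s => β * φ (τf s)) (β * (deriv φ (τf t) * f t)) t :=
        hcomp.const_mul β
      have heq : ϑ =ᶠ[nhds t] fun s => β * φ (τf s) := by
        filter_upwards [hnhds] with s hs
        exact hϑφ s hs
      rw [Filter.EventuallyEq.deriv_eq heq]
      exact h2.deriv
    -- rewrite the goal in terms of ρ, φ, f at τf t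
    rw [hdr, hdϑ, hϑφ t htm, hrρ t htm]
    simp only [hG, smul_eq_mul, abs_of_pos hDpos]
    set X : ℝ := ρ (τf t) with hX
    set p : ℝ := deriv ρ (τf t) with hp
    set q : ℝ := deriv φ (τf t) with hq
    set u : ℝ := U (β * φ (τf t)) with hu
    set D : ℝ := f t with hD
    -- exponent bookkeeping
    have hA : (X ^ (β - 1)) ^ 2 * D ^ 2 = D := by
      rw [hDX, ← Real.rpow_natCast (X ^ (β - 1)) 2, ← Real.rpow_natCast (X ^ (2 - 2 * β)) 2,
        ← Real.rpow_mul hXpos.le, ← Real.rpow_mul hXpos.le, ← Real.rpow_add hXpos]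
      congr 1
      push_cast
      ring
    have hB : (X ^ β) ^ 2 * D ^ 2 = X ^ 2 * D := by
      rw [hDX, ← Real.rpow_natCast (X ^ β) 2, ← Real.rpow_natCast (X ^ (2 - 2 * β)) 2,
        ← Real.rpow_mul hXpos.le, ← Real.rpow_mul hXpos.le, ← Real.rpow_add hXpos,
        ← Real.rpow_natCast X 2, ← Real.rpow_add hXpos]
      congr 1
      push_cast
      ring
    have hsplit : X ^ (β * α) * D = X ^ (2 - β * (2 - α)) := by
      rw [hDX, ← Real.rpow_add hXpos]
      congr 1
      ring
    have hCne : (X : ℝ) ^ (2 - β * (2 - α)) ≠ 0 := (Real.rpow_pos_of_pos hXpos _).ne'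
    have hBαne : (X : ℝ) ^ (β * α) ≠ 0 := (Real.rpow_pos_of_pos hXpos _).ne'
    have hC : u / (X ^ β) ^ α = u * D / X ^ (2 - β * (2 - α)) := by
      rw [← Real.rpow_mul hXpos.le β α, ← hsplit]
      rw [mul_comm (X ^ (β * α)) D, ← div_div, mul_div_assoc, div_self hDpos.ne', mul_one]
    rw [hC]
    calc 1 / 2 * ((p * D * β * X ^ (β - 1)) ^ 2 + (X ^ β) ^ 2 * (β * (q * D)) ^ 2)
          + u * D / X ^ (2 - β * (2 - α))
        = 1 / 2 * (β ^ 2 * p ^ 2 * ((X ^ (β - 1)) ^ 2 * D ^ 2)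
            + β ^ 2 * q ^ 2 * ((X ^ β) ^ 2 * D ^ 2)) + u * D / X ^ (2 - β * (2 - α)) := by
          ring
      _ = 1 / 2 * (β ^ 2 * p ^ 2 * D + β ^ 2 * q ^ 2 * (X ^ 2 * D))
            + u * D / X ^ (2 - β * (2 - α)) := by rw [hA, hB]
      _ = D * (β ^ 2 * (1 / 2 * (p ^ 2 + X ^ 2 * q ^ 2)
            + u / β ^ 2 / X ^ (2 - β * (2 - α)))) := by
          field_simp
  -- assemble
  rw [intervalIntegral.integral_of_le hab', MeasureTheory.integral_Ioc_eq_integral_Ioo,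
    intervalIntegral.integral_of_le ha'b'.le, MeasureTheory.integral_Ioc_eq_integral_Ioo]
  rw [MeasureTheory.setIntegral_congr_fun measurableSet_Ioo hpt]
  rw [← key, himg]
  rw [← MeasureTheory.integral_const_mul]
end
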